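/- Let Σ be a Riemann surface, α ∈ ℂ̂, μ ∈ ℤ_{≥2}, and let {g_n} be a sequence of holomorphic maps Σ → ℂ̂ converging locally uniformly (in the spherical metric) to a nonconstant holomorphic map g, such that for every n, either g_n is constant or α is a totally ramified value of g_n of order at least μ. Then α is a totally ramified value of g of order at least μ. -/

import Mathlib

open Filter Topology Set OnePoint

attribute [local instance] Classical.propDecidable

/-- Finite part of a point of the Riemann sphere (`0` at `∞`). -/
noncomputable def sval (x : OnePoint ℂ) : ℂ := Option.elim x 0 id

/-- Reciprocal chart of the Riemann sphere (`0` at `∞`). -/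
noncomputable def sinv (x : OnePoint ℂ) : ℂ := Option.elim x 0 (·⁻¹)

/-- `g : ℂ → ℂ̂` is a holomorphic map to the Riemann sphere on `U`: it is continuous and, near
each point, analytic in one of the two standard charts of the sphere. -/
def HoloSphereOn (g : ℂ → OnePoint ℂ) (U : Set ℂ) : Prop :=
  ContinuousOn g U ∧
    ∀ z ∈ U, AnalyticAt ℂ (fun w => sval (g w)) z ∨ AnalyticAt ℂ (fun w => sinv (g w)) z

/-- `α` is a totally ramified value of `g` of order at least `μ` on `U`: every solution of
`g = α` in `U` has multiplicity at least `μ` (in the appropriate chart of the sphere). -/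
def IsTRV (g : ℂ → OnePoint ℂ) (U : Set ℂ) (α : OnePoint ℂ) (μ : ℕ∞) : Prop :=
  ∀ z ∈ U, g z = α → ∀ k : ℕ, 1 ≤ k → (k : ℕ∞) < μ →
    iteratedDeriv k (fun w => if α = ∞ then sinv (g w) else sval (g w)) z = 0

/-- The chordal distance on the Riemann sphere (half of the spherical distance). -/
noncomputable def chordDist (x y : OnePoint ℂ) : ℝ :=
  if x = ∞ then (if y = ∞ then 0 else 1 / Real.sqrt (1 + ‖sval y‖ ^ 2))
  else if y = ∞ then 1 / Real.sqrt (1 + ‖sval x‖ ^ 2)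
  else ‖sval x - sval y‖ / (Real.sqrt (1 + ‖sval x‖ ^ 2) * Real.sqrt (1 + ‖sval y‖ ^ 2))

-- basic chart lemmas
lemma sval_coe (c : ℂ) : sval (c : OnePoint ℂ) = c := rfl
lemma sval_infty : sval ∞ = 0 := rfl
lemma sinv_coe (c : ℂ) : sinv (c : OnePoint ℂ) = c⁻¹ := rfl
lemma sinv_infty : sinv ∞ = 0 := rfl

lemma sval_eq_inv_sinv (x : OnePoint ℂ) : sval x = (sinv x)⁻¹ := by
  cases x with
  | infty => simp [sval_infty, sinv_infty]
  | coe c => simp [sval_coe, sinv_coe]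

lemma sinv_eq_inv_sval (x : OnePoint ℂ) : sinv x = (sval x)⁻¹ := by
  cases x with
  | infty => simp [sval_infty, sinv_infty]
  | coe c => simp [sval_coe, sinv_coe]

noncomputable def mchart (α x : OnePoint ℂ) : ℂ := if α = ∞ then sinv x else sval x
noncomputable def mbad (α : OnePoint ℂ) : OnePoint ℂ := if α = ∞ then ((0:ℂ) : OnePoint ℂ) else ∞

lemma ne_mbad (α : OnePoint ℂ) : α ≠ mbad α := by
  by_cases hα : α = ∞
  · simp [mbad, hα]
  · simp [mbad, hα]

lemma mchart_inj {α x : OnePoint ℂ} (hx : x ≠ mbad α) (h : mchart α x = mchart α α) : x = α := by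
  by_cases hα : α = ∞
  · subst hα
    cases x with
    | infty => rfl
    | coe c =>
      simp [mchart, sinv_infty, sinv_coe, inv_eq_zero] at h
      subst h
      exact absurd (by simp [mbad]) hx
  · simp only [mbad, if_neg hα] at hx
    cases x with
    | infty => exact absurd rfl hx
    | coe c =>
      cases α with
      | infty => exact absurd rfl hα
      | coe a =>
        simp [mchart, hα, sval_coe] at h
        exact congrArg _ h

lemma analyticAt_sval {h : ℂ → OnePoint ℂ} {U : Set ℂ} (hh : HoloSphereOn h U) (hU : IsOpen U)
    {p : ℂ} (hp : p ∈ U) (hne : h p ≠ ∞) : AnalyticAt ℂ (fun w => sval (h w)) p := by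
  rcases hh.2 p hp with hs | hi
  · exact hs
  · have hc : ContinuousAt h p := hh.1.continuousAt (hU.mem_nhds hp)
    rcases eq_or_ne (h p) (((0:ℂ)) : OnePoint ℂ) with h0 | h0
    · -- h ≡ 0 near p
      have hV : IsOpen ((fun c : ℂ => (c : OnePoint ℂ)) '' Metric.ball 0 (1/2)) :=
        OnePoint.isOpenEmbedding_coe.isOpenMap _ Metric.isOpen_ball
      have hmem : h p ∈ (fun c : ℂ => (c : OnePoint ℂ)) '' Metric.ball 0 (1/2) :=
        ⟨0, by simp, h0.symm⟩
      have e1 : ∀ᶠ w in 𝓝 p, h w ∈ (fun c : ℂ => (c : OnePoint ℂ)) '' Metric.ball 0 (1/2) :=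
        hc.eventually_mem (hV.mem_nhds hmem)
      have e2 : ∀ᶠ w in 𝓝 p, ‖sinv (h w)‖ < 1 := by
        have hct : ContinuousAt (fun w => sinv (h w)) p := hi.continuousAt
        have hval : sinv (h p) = 0 := by rw [h0, sinv_coe]; simp
        have := hct.eventually_mem (Metric.ball_mem_nhds (sinv (h p)) one_pos)
        filter_upwards [this] with w hw
        rw [hval] at hw
        simpa [Metric.mem_ball, dist_eq_norm] using hw
      have hev : ∀ᶠ w in 𝓝 p, sval (h w) = 0 := by
        filter_upwards [e1, e2] with w hw1 hw2
        obtain ⟨c, hcb, hceq⟩ := hw1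
        rcases eq_or_ne c 0 with rfl | hc0
        · rw [← hceq, sval_coe]
        · exfalso
          rw [← hceq, sinv_coe, norm_inv] at hw2
          rw [Metric.mem_ball, dist_zero_right] at hcb
          have h1 : ‖c‖ * ‖c‖⁻¹ = 1 := mul_inv_cancel₀ (norm_ne_zero_iff.mpr hc0)
          have h2 : (0:ℝ) < ‖c‖⁻¹ := inv_pos.mpr (norm_pos_iff.mpr hc0)
          nlinarith
      exact analyticAt_const.congr (by filter_upwards [hev] with w hw; rw [hw])
    · have hi0 : sinv (h p) ≠ 0 := by
        cases hhp : h p with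
        | infty => exact absurd hhp hne
        | coe c =>
          rw [hhp] at h0
          rw [sinv_coe]
          exact inv_ne_zero (fun hc => h0 (by rw [hc]))
      have heq : (fun w => sval (h w)) = fun w => (sinv (h w))⁻¹ :=
        funext fun w => sval_eq_inv_sinv (h w)
      rw [heq]
      exact hi.inv hi0

lemma analyticAt_sinv {h : ℂ → OnePoint ℂ} {U : Set ℂ} (hh : HoloSphereOn h U) (hU : IsOpen U)
    {p : ℂ} (hp : p ∈ U) (hne : h p ≠ (((0:ℂ)) : OnePoint ℂ)) :
    AnalyticAt ℂ (fun w => sinv (h w)) p := by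
  rcases hh.2 p hp with hs | hi
  · have hc : ContinuousAt h p := hh.1.continuousAt (hU.mem_nhds hp)
    rcases eq_or_ne (h p) ∞ with h0 | h0
    · -- h ≡ ∞ near p
      set s : Set (OnePoint ℂ) := {x | x = ∞ ∨ 2 < ‖sval x‖} with hs_def
      have hs_open : IsOpen s := by
        rw [OnePoint.isOpen_iff_of_mem' (by simp [hs_def])]
        constructor
        · have : ((fun c : ℂ => (c : OnePoint ℂ)) ⁻¹' s)ᶜ = Metric.closedBall (0:ℂ) 2 := by
            ext c
            simp [hs_def, sval_coe, Metric.mem_closedBall, dist_zero_right, not_lt]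
          rw [this]
          exact isCompact_closedBall 0 2
        · have : ((fun c : ℂ => (c : OnePoint ℂ)) ⁻¹' s) = {c : ℂ | 2 < ‖c‖} := by
            ext c; simp [hs_def, sval_coe]
          rw [this]
          exact isOpen_lt continuous_const continuous_norm
      have e1 : ∀ᶠ w in 𝓝 p, h w ∈ s :=
        hc.eventually_mem (hs_open.mem_nhds (by simp [hs_def, h0]))
      have e2 : ∀ᶠ w in 𝓝 p, ‖sval (h w)‖ < 1 := by
        have hct : ContinuousAt (fun w => sval (h w)) p := hs.continuousAt
        have hval : sval (h p) = 0 := by rw [h0, sval_infty]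
        have := hct.eventually_mem (Metric.ball_mem_nhds (sval (h p)) one_pos)
        filter_upwards [this] with w hw
        rw [hval] at hw
        simpa [Metric.mem_ball, dist_eq_norm] using hw
      have hev : ∀ᶠ w in 𝓝 p, sinv (h w) = 0 := by
        filter_upwards [e1, e2] with w hw1 hw2
        rcases hw1 with hw1 | hw1
        · rw [hw1, sinv_infty]
        · linarith
      exact analyticAt_const.congr (by filter_upwards [hev] with w hw; rw [hw])
    · have hs0 : sval (h p) ≠ 0 := by
        cases hhp : h p with
        | infty => exact absurd hhp h0
        | coe c =>
          rw [hhp] at hne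
          rw [sval_coe]
          exact fun hc => hne (by rw [hc])
      have heq : (fun w => sinv (h w)) = fun w => (sval (h w))⁻¹ :=
        funext fun w => sinv_eq_inv_sval (h w)
      rw [heq]
      exact hs.inv hs0
  · exact hi

lemma analyticAt_mchart {α : OnePoint ℂ} {h : ℂ → OnePoint ℂ} {U : Set ℂ} (hh : HoloSphereOn h U)
    (hU : IsOpen U) {p : ℂ} (hp : p ∈ U) (hne : h p ≠ mbad α) :
    AnalyticAt ℂ (fun w => mchart α (h w)) p := by
  by_cases hα : α = ∞
  · have heq : (fun w => mchart α (h w)) = fun w => sinv (h w) := by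
      funext w; simp [mchart, hα]
    rw [heq]
    exact analyticAt_sinv hh hU hp (by simpa [mbad, hα] using hne)
  · have heq : (fun w => mchart α (h w)) = fun w => sval (h w) := by
      funext w; simp [mchart, hα]
    rw [heq]
    exact analyticAt_sval hh hU hp (by simpa [mbad, hα] using hne)

lemma sqrt_one_add_sq_pos (s : ℝ) : 0 < Real.sqrt (1 + s ^ 2) :=
  Real.sqrt_pos.mpr (by positivity)

lemma one_le_sqrt_one_add_sq (s : ℝ) : 1 ≤ Real.sqrt (1 + s ^ 2) := by
  have := Real.sqrt_le_sqrt (show (1:ℝ) ≤ 1 + s ^ 2 by nlinarith)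
  simpa using this

lemma sqrt_one_add_sq_le {s : ℝ} (hs : 0 ≤ s) : Real.sqrt (1 + s ^ 2) ≤ 1 + s := by
  rw [show (1:ℝ) + s = Real.sqrt ((1+s)^2) by rw [Real.sqrt_sq (by linarith)]]
  exact Real.sqrt_le_sqrt (by nlinarith)

lemma sqrt_one_add_inv_sq {a : ℝ} (ha : 0 < a) :
    Real.sqrt (1 + (a⁻¹) ^ 2) = Real.sqrt (1 + a ^ 2) / a := by
  have h1 : (1 + (a⁻¹) ^ 2) = (1 + a ^ 2) / a ^ 2 := by field_simp; ring
  rw [h1, Real.sqrt_div (by positivity), Real.sqrt_sq ha.le]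

lemma mchart_chordDist {α x y : OnePoint ℂ} (hx : x ≠ mbad α) (hy : y ≠ mbad α) :
    chordDist x y = ‖mchart α x - mchart α y‖ /
      (Real.sqrt (1 + ‖mchart α x‖ ^ 2) * Real.sqrt (1 + ‖mchart α y‖ ^ 2)) := by
  by_cases hα : α = ∞
  · simp only [mbad, if_pos hα] at hx hy
    simp only [mchart, if_pos hα]
    cases x with
    | infty =>
      cases y with
      | infty => simp [chordDist, sinv_infty]
      | coe b =>
        have hb : b ≠ 0 := fun h => hy (by rw [h])
        have hbn : (0:ℝ) < ‖b‖ := norm_pos_iff.mpr hb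
        have hS : (0:ℝ) < Real.sqrt (1 + ‖b‖ ^ 2) := sqrt_one_add_sq_pos ‖b‖
        rw [show chordDist ∞ (↑b) = 1 / Real.sqrt (1 + ‖b‖ ^ 2) by
          simp [chordDist, coe_ne_infty, sval_coe]]
        rw [sinv_infty, sinv_coe, zero_sub, norm_neg, norm_inv, norm_zero,
          sqrt_one_add_inv_sq hbn, show (1:ℝ) + 0 ^ 2 = 1 by ring, Real.sqrt_one]
        field_simp
    | coe a =>
      have ha : a ≠ 0 := fun h => hx (by rw [h])
      have han : (0:ℝ) < ‖a‖ := norm_pos_iff.mpr ha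
      have hSa : (0:ℝ) < Real.sqrt (1 + ‖a‖ ^ 2) := sqrt_one_add_sq_pos ‖a‖
      cases y with
      | infty =>
        rw [show chordDist (↑a) ∞ = 1 / Real.sqrt (1 + ‖a‖ ^ 2) by
          simp [chordDist, coe_ne_infty, sval_coe]]
        rw [sinv_infty, sinv_coe, sub_zero, norm_inv, norm_zero,
          sqrt_one_add_inv_sq han, show (1:ℝ) + 0 ^ 2 = 1 by ring, Real.sqrt_one]
        field_simp
      | coe b =>
        have hb : b ≠ 0 := fun h => hy (by rw [h])
        have hbn : (0:ℝ) < ‖b‖ := norm_pos_iff.mpr hb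
        have hSb : (0:ℝ) < Real.sqrt (1 + ‖b‖ ^ 2) := sqrt_one_add_sq_pos ‖b‖
        rw [show chordDist (↑a) (↑b)
            = ‖a - b‖ / (Real.sqrt (1 + ‖a‖ ^ 2) * Real.sqrt (1 + ‖b‖ ^ 2)) by
          simp [chordDist, coe_ne_infty, sval_coe]]
        rw [sinv_coe, sinv_coe]
        rw [show a⁻¹ - b⁻¹ = (b - a) * a⁻¹ * b⁻¹ by field_simp]
        rw [norm_mul, norm_mul, norm_inv, norm_inv, norm_sub_rev,
          sqrt_one_add_inv_sq han, sqrt_one_add_inv_sq hbn]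
        have key : ∀ (A x y S T : ℝ), x ≠ 0 → y ≠ 0 → S ≠ 0 → T ≠ 0 →
            A = A * (x * y) * (S * T) / (x * y * (S * T)) := by
          intro A x y S T hx hy hS hT
          field_simp
        field_simp
  · simp only [mbad, if_neg hα] at hx hy
    simp only [mchart, if_neg hα]
    cases x with
    | infty => exact absurd rfl hx
    | coe a =>
      cases y with
      | infty => exact absurd rfl hy
      | coe b =>
        simp [chordDist, coe_ne_infty, sval_coe]

lemma chordDist_mbad {α y : OnePoint ℂ} (hy : y ≠ mbad α) :
    chordDist (mbad α) y = 1 / Real.sqrt (1 + ‖mchart α y‖ ^ 2) := by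
  by_cases hα : α = ∞
  · simp only [mbad, if_pos hα] at hy ⊢
    simp only [mchart, if_pos hα]
    cases y with
    | infty =>
      rw [show chordDist (↑(0:ℂ)) ∞ = 1 / Real.sqrt (1 + ‖(0:ℂ)‖ ^ 2) by
        simp [chordDist, coe_ne_infty, sval_coe]]
      rw [sinv_infty, norm_zero]
    | coe b =>
      have hb : b ≠ 0 := fun h => hy (by rw [h])
      have hbn : (0:ℝ) < ‖b‖ := norm_pos_iff.mpr hb
      have hSb : (0:ℝ) < Real.sqrt (1 + ‖b‖ ^ 2) := sqrt_one_add_sq_pos ‖b‖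
      rw [show chordDist (↑(0:ℂ)) (↑b)
          = ‖(0:ℂ) - b‖ / (Real.sqrt (1 + ‖(0:ℂ)‖ ^ 2) * Real.sqrt (1 + ‖b‖ ^ 2)) by
        simp [chordDist, coe_ne_infty, sval_coe]]
      rw [sinv_coe, zero_sub, norm_neg, norm_inv, norm_zero,
        sqrt_one_add_inv_sq hbn, show (1:ℝ) + 0 ^ 2 = 1 by ring, Real.sqrt_one]
      field_simp
  · simp only [mbad, if_neg hα] at hy ⊢
    simp only [mchart, if_neg hα]
    cases y with
    | infty => exact absurd rfl hy
    | coe b =>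
      rw [show chordDist ∞ (↑b) = 1 / Real.sqrt (1 + ‖b‖ ^ 2) by
        simp [chordDist, coe_ne_infty, sval_coe]]
      rw [sval_coe]

lemma chordDist_mbad_ge {α y : OnePoint ℂ} {C : ℝ} (hy : y ≠ mbad α) (hC : ‖mchart α y‖ ≤ C) :
    1 / Real.sqrt (1 + C ^ 2) ≤ chordDist (mbad α) y := by
  rw [chordDist_mbad hy]
  apply one_div_le_one_div_of_le (sqrt_one_add_sq_pos _)
  apply Real.sqrt_le_sqrt
  have : ‖mchart α y‖ ^ 2 ≤ C ^ 2 := by nlinarith [norm_nonneg (mchart α y)]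
  linarith

lemma chord_norm_sub_le {α x y : OnePoint ℂ} {C ε : ℝ} (hx : x ≠ mbad α) (hy : y ≠ mbad α)
    (hC : ‖mchart α y‖ ≤ C) (hC0 : 0 ≤ C) (hε : ε * (1 + C) ≤ 1 / 2)
    (hd : chordDist x y < ε) : ‖mchart α x - mchart α y‖ ≤ 2 * ε * (1 + C) ^ 2 := by
  rw [mchart_chordDist hx hy] at hd
  set A := ‖mchart α x‖ with hA
  set B := ‖mchart α y‖ with hB
  set t := ‖mchart α x - mchart α y‖ with ht
  have hA0 : 0 ≤ A := norm_nonneg _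
  have hB0 : 0 ≤ B := norm_nonneg _
  have ht0 : 0 ≤ t := norm_nonneg _
  have hSA : 0 < Real.sqrt (1 + A ^ 2) := sqrt_one_add_sq_pos _
  have hSB : 0 < Real.sqrt (1 + B ^ 2) := sqrt_one_add_sq_pos _
  have hε0 : 0 < ε :=
    lt_of_le_of_lt (by positivity : (0:ℝ) ≤ t / (Real.sqrt (1 + A ^ 2) * Real.sqrt (1 + B ^ 2))) hd
  have h1 : t < ε * (Real.sqrt (1 + A ^ 2) * Real.sqrt (1 + B ^ 2)) := by
    rw [div_lt_iff₀ (by positivity)] at hd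
    linarith
  have hAB : A ≤ C + t := by
    have := norm_sub_norm_le (mchart α x) (mchart α y)
    rw [← hA, ← hB, ← ht] at this
    linarith
  have h2 : Real.sqrt (1 + A ^ 2) ≤ 1 + C + t :=
    le_trans (sqrt_one_add_sq_le hA0) (by linarith)
  have h3 : Real.sqrt (1 + B ^ 2) ≤ 1 + C :=
    le_trans (sqrt_one_add_sq_le hB0) (by linarith)
  have h4 : Real.sqrt (1 + A ^ 2) * Real.sqrt (1 + B ^ 2) ≤ (1 + C + t) * (1 + C) :=
    mul_le_mul h2 h3 hSB.le (by linarith)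
  have h5 : t < ε * ((1 + C + t) * (1 + C)) :=
    lt_of_lt_of_le h1 (mul_le_mul_of_nonneg_left h4 hε0.le)
  have h6 : ε * (1 + C) * t ≤ (1/2) * t := mul_le_mul_of_nonneg_right hε ht0
  nlinarith [h5, h6]

lemma iteratedDeriv_const_succ (m : ℕ) (c : ℂ) :
    iteratedDeriv (m + 1) (fun _ : ℂ => c) = fun _ => 0 := by
  induction m with
  | zero => rw [iteratedDeriv_one]; exact deriv_const' c
  | succ m ih => rw [iteratedDeriv_succ, ih]; funext x; exact deriv_const x 0

lemma AnalyticOnNhd.iteratedDeriv' {f : ℂ → ℂ} {s : Set ℂ} (h : AnalyticOnNhd ℂ f s) (n : ℕ) :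
    AnalyticOnNhd ℂ (iteratedDeriv n f) s := by
  induction n with
  | zero => simpa [iteratedDeriv_zero] using h
  | succ n ih => rw [iteratedDeriv_succ]; exact ih.deriv


/-- If holomorphic maps `gₙ : Σ → ℂ̂` converge locally uniformly (in the spherical metric)
to a nonconstant holomorphic map `g`, and each `gₙ` is constant or has `α` as a totally
ramified value of order at least `μ`, then `α` is a totally ramified value of `g` of order
at least `μ`. -/
theorem totallyRamified_closed (U : Set ℂ) (hU : IsOpen U) (hUc : IsPreconnected U)
    (α : OnePoint ℂ) (μ : ℕ) (hμ : 2 ≤ μ)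
    (gs : ℕ → ℂ → OnePoint ℂ) (g : ℂ → OnePoint ℂ)
    (hgs : ∀ n, HoloSphereOn (gs n) U) (hg : HoloSphereOn g U)
    (hconv : ∀ K ⊆ U, IsCompact K → ∀ ε > (0:ℝ),
      ∀ᶠ n in Filter.atTop, ∀ z ∈ K, chordDist (gs n z) (g z) < ε)
    (hnc : ¬ ∃ c : OnePoint ℂ, ∀ z ∈ U, g z = c)
    (hram : ∀ n, (∃ c : OnePoint ℂ, ∀ z ∈ U, gs n z = c) ∨ IsTRV (gs n) U α (μ : ℕ∞)) :
    IsTRV g U α (μ : ℕ∞) := by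
  intro z hzU hgz k hk1 hkμ
  show iteratedDeriv k (fun w => mchart α (g w)) z = 0
  set f : ℂ → ℂ := fun w => mchart α (g w) with hf_def
  set fn : ℕ → ℂ → ℂ := fun n w => mchart α (gs n w) with hfn_def
  have hgz_ne : g z ≠ mbad α := by rw [hgz]; exact ne_mbad α
  set W : Set ℂ := U ∩ g ⁻¹' {mbad α}ᶜ with hW_def
  have hWopen : IsOpen W := hg.1.isOpen_inter_preimage hU isOpen_compl_singleton
  have hzW : z ∈ W := ⟨hzU, hgz_ne⟩
  have hWU : W ⊆ U := inter_subset_left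
  have hWne : ∀ p ∈ W, g p ≠ mbad α := fun p hp => hp.2
  have hfa : AnalyticOnNhd ℂ f W := fun p hp => analyticAt_mchart hg hU hp.1 (hWne p hp)
  have hfc : ContinuousOn f W := fun p hp => (hfa p hp).continuousAt.continuousWithinAt
  set c₀ : ℂ := f z with hc₀_def
  rcases ((hfa z hzW).sub (analyticAt_const (v := c₀))).eventually_eq_zero_or_eventually_ne_zero
    with hcase | hcase
  · -- locally constant case: all derivatives vanish
    have hconst : f =ᶠ[𝓝 z] (fun _ => c₀) := by
      filter_upwards [hcase] with w hw
      exact sub_eq_zero.mp hw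
    rw [hconst.iteratedDeriv_eq k]
    obtain ⟨m, rfl⟩ : ∃ m, k = m + 1 := ⟨k - 1, (Nat.succ_pred_eq_of_pos hk1).symm⟩
    rw [iteratedDeriv_const_succ]
  · -- main case
    have h1 : ∀ᶠ w in 𝓝 z, (w ≠ z → f w - c₀ ≠ 0) ∧ w ∈ W :=
      (eventually_nhdsWithin_iff.mp hcase).and (hWopen.mem_nhds hzW)
    obtain ⟨R0, hR0, hball⟩ := Metric.eventually_nhds_iff_ball.mp h1
    set R : ℝ := R0 / 2 with hR_def
    have hRpos : 0 < R := by positivity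
    have hRR0 : R < R0 := by rw [hR_def]; linarith
    have hcb_ball : Metric.closedBall z R ⊆ Metric.ball z R0 :=
      Metric.closedBall_subset_ball hRR0
    have hcbW : Metric.closedBall z R ⊆ W := fun w hw => (hball w (hcb_ball hw)).2
    have hballW : Metric.ball z R ⊆ W := fun w hw => hcbW (Metric.ball_subset_closedBall hw)
    have hne_on : ∀ w ∈ Metric.ball z R0, w ≠ z → f w ≠ c₀ := by
      intro w hw hwz
      exact sub_ne_zero.mp ((hball w hw).1 hwz)
    -- uniform convergence machinery
    have HK : ∀ K' : Set ℂ, K' ⊆ W → IsCompact K' → ∀ η > (0:ℝ),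
        ∀ᶠ n in atTop, ∀ w ∈ K', ‖fn n w - f w‖ < η := by
      intro K' hK'W hK'c η hη
      obtain ⟨C0, hC0b⟩ := hK'c.exists_bound_of_continuousOn (hfc.mono hK'W)
      set C : ℝ := max C0 0 with hC_def
      have hCnn : (0:ℝ) ≤ C := le_max_right _ _
      have hCb : ∀ w ∈ K', ‖f w‖ ≤ C := fun w hw => le_trans (hC0b w hw) (le_max_left _ _)
      have h1C : (0:ℝ) < 1 + C := by linarith
      set ε₀ : ℝ := 1 / Real.sqrt (1 + C ^ 2) with hε₀_def
      have hε₀pos : 0 < ε₀ := by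
        rw [hε₀_def]
        positivity
      set ε : ℝ := min (ε₀ / 2) (min (η / (4 * (1 + C) ^ 2)) (1 / (2 * (1 + C)))) with hε_def
      have hεpos : 0 < ε := by
        rw [hε_def]
        apply lt_min (by positivity) (lt_min (by positivity) (by positivity))
      filter_upwards [hconv K' (hK'W.trans hWU) hK'c ε hεpos] with n hn w hw
      have hgw_ne : g w ≠ mbad α := hWne w (hK'W hw)
      have hgs_ne : gs n w ≠ mbad α := by
        intro heq
        have hlow := chordDist_mbad_ge (α := α) (y := g w) hgw_ne (hCb w hw)
        have hup := hn w hw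
        rw [heq] at hup
        have : ε ≤ ε₀ / 2 := min_le_left _ _
        rw [← hε₀_def] at hlow
        linarith
      have hε2 : ε * (1 + C) ≤ 1 / 2 := by
        have hle : ε ≤ 1 / (2 * (1 + C)) := le_trans (min_le_right _ _) (min_le_right _ _)
        have := mul_le_mul_of_nonneg_right hle h1C.le
        have heq : 1 / (2 * (1 + C)) * (1 + C) = 1 / 2 := by field_simp
        linarith
      have hb := chord_norm_sub_le (α := α) hgs_ne hgw_ne (hCb w hw) hCnn hε2 (hn w hw)
      have hεη : 2 * ε * (1 + C) ^ 2 ≤ η / 2 := by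
        have hle : ε ≤ η / (4 * (1 + C) ^ 2) :=
          le_trans (min_le_right _ _) (min_le_left _ _)
        have h2 := mul_le_mul_of_nonneg_right hle (by positivity : (0:ℝ) ≤ 2 * (1 + C) ^ 2)
        have heq : η / (4 * (1 + C) ^ 2) * (2 * (1 + C) ^ 2) = η / 2 := by field_simp; ring
        nlinarith
      calc ‖fn n w - f w‖ ≤ 2 * ε * (1 + C) ^ 2 := hb
        _ ≤ η / 2 := hεη
        _ < η := by linarith
    -- eventually gs n avoids the bad point on the closed ball
    have E1 : ∀ᶠ n in atTop, ∀ w ∈ Metric.closedBall z R, gs n w ≠ mbad α := by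
      obtain ⟨C0, hC0b⟩ := (isCompact_closedBall z R).exists_bound_of_continuousOn
        (hfc.mono hcbW)
      set C : ℝ := max C0 0 with hC_def
      have hCb : ∀ w ∈ Metric.closedBall z R, ‖f w‖ ≤ C :=
        fun w hw => le_trans (hC0b w hw) (le_max_left _ _)
      have hε₀pos : (0:ℝ) < 1 / Real.sqrt (1 + C ^ 2) := by positivity
      filter_upwards [hconv (Metric.closedBall z R) (hcbW.trans hWU)
        (isCompact_closedBall z R) _ hε₀pos] with n hn w hw heq
      have hlow := chordDist_mbad_ge (α := α) (y := g w) (hWne w (hcbW hw)) (hCb w hw)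
      have hup := hn w hw
      rw [heq] at hup
      linarith
    -- eventual analyticity of fn on the ball
    have hAn : ∀ᶠ n in atTop, AnalyticOnNhd ℂ (fn n) (Metric.ball z R) := by
      filter_upwards [E1] with n hn p hp
      exact analyticAt_mchart (hgs n) hU (hWU (hballW hp))
        (hn p (Metric.ball_subset_closedBall hp))
    -- locally uniform convergence of fn to f on the ball
    have hTLU0 : TendstoLocallyUniformlyOn (fun n => fn n) f atTop (Metric.ball z R) := by
      rw [tendstoLocallyUniformlyOn_iff_forall_isCompact Metric.isOpen_ball]
      intro K' hK's hK'c
      rw [Metric.tendstoUniformlyOn_iff]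
      intro η hη
      filter_upwards [HK K' (hK's.trans hballW) hK'c η hη] with n hn w hw
      rw [dist_eq_norm, norm_sub_rev]
      exact hn w hw
    -- locally uniform convergence of all iterated derivatives
    have hTLUk : ∀ j : ℕ, TendstoLocallyUniformlyOn (fun n => iteratedDeriv j (fn n))
        (iteratedDeriv j f) atTop (Metric.ball z R) := by
      intro j
      induction j with
      | zero => simpa [iteratedDeriv_zero] using hTLU0
      | succ j ih =>
        have hd : ∀ᶠ n in atTop, DifferentiableOn ℂ (iteratedDeriv j (fn n))
            (Metric.ball z R) := by
          filter_upwards [hAn] with n hn p hp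
          exact ((hn.iteratedDeriv' j) p hp).differentiableAt.differentiableWithinAt
        have hstep := ih.deriv hd Metric.isOpen_ball
        have heq : (fun n => iteratedDeriv (j+1) (fn n))
            = (deriv ∘ fun n => iteratedDeriv j (fn n)) := by
          funext n
          rw [Function.comp_apply, iteratedDeriv_succ]
        rw [heq, iteratedDeriv_succ]
        exact hstep
    -- continuity of the k-th derivative of f at z
    have hfa_ball : AnalyticOnNhd ℂ f (Metric.ball z R) := fun p hp => hfa p (hballW hp)
    have hDan : AnalyticOnNhd ℂ (iteratedDeriv k f) (Metric.ball z R) :=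
      hfa_ball.iteratedDeriv' k
    have hDcont : ContinuousAt (iteratedDeriv k f) z :=
      (hDan z (Metric.mem_ball_self hRpos)).continuousAt
    -- final: show the derivative vanishes
    rw [← norm_le_zero_iff]
    apply le_of_forall_pos_le_add
    intro η hη
    rw [zero_add]
    -- choose a small radius ρ
    obtain ⟨ρ₀, hρ₀pos, hρ₀⟩ := Metric.continuousAt_iff.mp hDcont (η / 2) (by linarith)
    set ρ : ℝ := min (ρ₀ / 2) (R / 2) with hρ_def
    have hρpos : 0 < ρ := lt_min (by linarith) (by linarith)
    have hρR : ρ < R := lt_of_le_of_lt (min_le_right _ _) (by linarith)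
    have hρρ₀ : ρ < ρ₀ := lt_of_le_of_lt (min_le_left _ _) (by linarith)
    have hcbρ_ball : Metric.closedBall z ρ ⊆ Metric.ball z R := Metric.closedBall_subset_ball hρR
    have hcbρ_cbR : Metric.closedBall z ρ ⊆ Metric.closedBall z R :=
      Metric.closedBall_subset_closedBall hρR.le
    -- minimum of ‖f - c₀‖ on the sphere of radius ρ
    have hsph_sub : Metric.sphere z ρ ⊆ Metric.closedBall z ρ := Metric.sphere_subset_closedBall
    have hsph_ne : (Metric.sphere z ρ).Nonempty := NormedSpace.sphere_nonempty.mpr hρpos.le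
    have hsph_cont : ContinuousOn (fun w => ‖f w - c₀‖) (Metric.sphere z ρ) := by
      apply ContinuousOn.norm
      exact (hfc.mono (fun w hw => hballW (hcbρ_ball (hsph_sub hw)))).sub continuousOn_const
    obtain ⟨w₀, hw₀S, hw₀min⟩ := (isCompact_sphere z ρ).exists_isMinOn hsph_ne hsph_cont
    set δ : ℝ := ‖f w₀ - c₀‖ with hδ_def
    have hδpos : 0 < δ := by
      rw [hδ_def, norm_pos_iff]
      apply sub_ne_zero.mpr
      have hw₀z : dist w₀ z = ρ := Metric.mem_sphere.mp hw₀S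
      have hw₀ball : w₀ ∈ Metric.ball z R0 := by
        rw [Metric.mem_ball, hw₀z]; linarith
      have hw₀ne : w₀ ≠ z := by
        intro h; rw [h, dist_self] at hw₀z; linarith
      exact hne_on w₀ hw₀ball hw₀ne
    have hδmin : ∀ w ∈ Metric.sphere z ρ, δ ≤ ‖f w - c₀‖ := fun w hw =>
      isMinOn_iff.mp hw₀min w hw
    -- the three eventual statements
    have ev2 : ∀ᶠ n in atTop, ∀ w ∈ Metric.closedBall z ρ, ‖fn n w - f w‖ < δ / 3 :=
      HK (Metric.closedBall z ρ) (fun w hw => hballW (hcbρ_ball hw))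
        (isCompact_closedBall z ρ) (δ / 3) (by linarith)
    have ev3 : ∀ᶠ n in atTop, ∀ p ∈ Metric.closedBall z ρ,
        dist (iteratedDeriv k f p) (iteratedDeriv k (fn n) p) < η / 2 := by
      have := (tendstoLocallyUniformlyOn_iff_forall_isCompact Metric.isOpen_ball).mp
        (hTLUk k) (Metric.closedBall z ρ) hcbρ_ball (isCompact_closedBall z ρ)
      exact Metric.tendstoUniformlyOn_iff.mp this (η / 2) (by linarith)
    obtain ⟨n, ⟨hn1, hn2⟩, hn3⟩ := ((E1.and ev2).and ev3).exists
    -- fn n is analytic near the closed ball of radius ρ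
    have hfn_an : ∀ p ∈ Metric.ball z R, AnalyticAt ℂ (fn n) p := fun p hp =>
      analyticAt_mchart (hgs n) hU (hWU (hballW hp)) (hn1 p (Metric.ball_subset_closedBall hp))
    -- existence of a zero of fn n - c₀ in the closed ball of radius ρ (Hurwitz)
    have hzero : ∃ p ∈ Metric.closedBall z ρ, fn n p = c₀ := by
      by_contra hno
      push_neg at hno
      have hsubne : ∀ w ∈ Metric.closedBall z ρ, fn n w - c₀ ≠ 0 := fun w hw =>
        sub_ne_zero.mpr (hno w hw)
      have hd1 : DifferentiableOn ℂ (fun w => (fn n w - c₀)⁻¹) (Metric.ball z ρ) := by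
        apply DifferentiableOn.inv
        · exact fun p hp => ((hfn_an p (hcbρ_ball (Metric.ball_subset_closedBall hp))
            ).differentiableAt.sub_const c₀).differentiableWithinAt
        · exact fun p hp => hsubne p (Metric.ball_subset_closedBall hp)
      have hcont1 : ContinuousOn (fun w => (fn n w - c₀)⁻¹) (Metric.closedBall z ρ) := by
        apply ContinuousOn.inv₀
        · exact fun p hp => ((hfn_an p (hcbρ_ball hp)).continuousAt.sub
            continuousAt_const).continuousWithinAt
        · exact hsubne
      have hDCC : DiffContOnCl ℂ (fun w => (fn n w - c₀)⁻¹) (Metric.ball z ρ) :=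
        ⟨hd1, by rwa [closure_ball z hρpos.ne']⟩
      have hbound : ∀ w ∈ frontier (Metric.ball z ρ),
          ‖(fn n w - c₀)⁻¹‖ ≤ (2 * δ / 3)⁻¹ := by
        rw [frontier_ball z hρpos.ne']
        intro w hwS
        have hw1 : δ ≤ ‖f w - c₀‖ := hδmin w hwS
        have hw2 : ‖fn n w - f w‖ < δ / 3 := hn2 w (hsph_sub hwS)
        have htri : ‖f w - c₀‖ ≤ ‖f w - fn n w‖ + ‖fn n w - c₀‖ := by
          calc ‖f w - c₀‖ = ‖(f w - fn n w) + (fn n w - c₀)‖ := by ring_nf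
            _ ≤ ‖f w - fn n w‖ + ‖fn n w - c₀‖ := norm_add_le _ _
        rw [norm_sub_rev] at hw2
        have hlow : 2 * δ / 3 ≤ ‖fn n w - c₀‖ := by linarith
        rw [norm_inv]
        exact inv_anti₀ (by linarith) hlow
      have hmax := Complex.norm_le_of_forall_mem_frontier_norm_le Metric.isBounded_ball
        hDCC hbound (by rw [closure_ball z hρpos.ne']; exact Metric.mem_closedBall_self hρpos.le)
      have hz_cb : z ∈ Metric.closedBall z ρ := Metric.mem_closedBall_self hρpos.le
      have hz1 : ‖fn n z - c₀‖ < δ / 3 := by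
        have := hn2 z hz_cb
        rwa [← hc₀_def] at this
      have hzpos : 0 < ‖fn n z - c₀‖ := norm_pos_iff.mpr (hsubne z hz_cb)
      rw [norm_inv] at hmax
      have h2δ3 : (0:ℝ) < 2 * δ / 3 := by linarith
      have hge : 2 * δ / 3 ≤ ‖fn n z - c₀‖ := by
        by_contra hlt
        push_neg at hlt
        have := inv_strictAnti₀ hzpos hlt
        linarith
      linarith
    obtain ⟨p, hpcb, hpzero⟩ := hzero
    have hpU : p ∈ U := hWU (hballW (hcbρ_ball hpcb))
    have hgsne : gs n p ≠ mbad α := hn1 p (hcbρ_cbR hpcb)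
    have hgsα : gs n p = α := by
      apply mchart_inj hgsne
      show fn n p = mchart α α
      rw [hpzero, hc₀_def]
      show mchart α (g z) = mchart α α
      rw [hgz]
    rcases hram n with ⟨c, hconstc⟩ | htrv
    · exfalso
      have hcα : c = α := by rw [← hconstc p hpU]; exact hgsα
      have hw₀U : w₀ ∈ U := hWU (hballW (hcbρ_ball (hsph_sub hw₀S)))
      have hfnw₀ : fn n w₀ = c₀ := by
        show mchart α (gs n w₀) = c₀
        rw [hconstc w₀ hw₀U, hcα, hc₀_def]
        show mchart α α = mchart α (g z)
        rw [hgz]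
      have hev := hn2 w₀ (hsph_sub hw₀S)
      rw [hfnw₀, norm_sub_rev] at hev
      have := hδmin w₀ hw₀S
      rw [← hδ_def] at this
      linarith
    · have h0 := htrv p hpU hgsα k hk1 hkμ
      have h0' : iteratedDeriv k (fn n) p = 0 := h0
      have hd3 := hn3 p hpcb
      rw [h0', dist_zero_right] at hd3
      have hdz : dist (iteratedDeriv k f z) (iteratedDeriv k f p) < η / 2 := by
        have hdist : dist p z < ρ₀ := lt_of_le_of_lt (Metric.mem_closedBall.mp hpcb) hρρ₀
        have := hρ₀ hdist
        rwa [dist_comm] at this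
      calc ‖iteratedDeriv k f z‖
          ≤ dist (iteratedDeriv k f z) (iteratedDeriv k f p) + ‖iteratedDeriv k f p‖ := by
            rw [dist_eq_norm]
            calc ‖iteratedDeriv k f z‖
                = ‖(iteratedDeriv k f z - iteratedDeriv k f p) + iteratedDeriv k f p‖ := by
                  ring_nf
              _ ≤ ‖iteratedDeriv k f z - iteratedDeriv k f p‖ + ‖iteratedDeriv k f p‖ :=
                  norm_add_le _ _
        _ ≤ η / 2 + η / 2 := add_le_add hdz.le hd3.le
        _ ≤ η := by linarith
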